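/- Let a ∈ S_{k,ℓ} with grid function γ_a. Then the grid-ranking matrix R_a = (r_{ij}) with r_{ij} = γ_a^{-1}(i,j) is a standard Young tableau of rectangular shape ℓ×k: its entries are a permutation of {1,...,kℓ} and each row and each column is increasing. -/

import Mathlib

/-- Length of the longest decreasing subsequence of `a` ending at the `t`-th
entry (1-based) of `a`. -/
noncomputable def gridI (a : List ℕ) (t : ℕ) : ℕ :=
  sSup {r | ∃ s : List ℕ, s.Sublist (a.take t) ∧ s.length = r ∧
    s.getLast? = a[t-1]? ∧ s.Pairwise (· > ·)}

/-- Length of the longest increasing subsequence of `a` ending at the `t`-th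
entry (1-based) of `a`. -/
noncomputable def gridJ (a : List ℕ) (t : ℕ) : ℕ :=
  sSup {r | ∃ s : List ℕ, s.Sublist (a.take t) ∧ s.length = r ∧
    s.getLast? = a[t-1]? ∧ s.Pairwise (· < ·)}

/-- `M`, restricted to `{1,…,ℓ} × {1,…,k}`, is a standard Young tableau of
rectangular shape `ℓ × k`: its entries are exactly `{1,…,kℓ}` and every row
and every column is strictly increasing. -/
def IsSYT (ℓ k : ℕ) (M : ℕ → ℕ → ℕ) : Prop :=
  Set.BijOn (fun p : ℕ × ℕ => M p.1 p.2)
    (↑(Finset.Icc 1 ℓ ×ˢ Finset.Icc 1 k) : Set (ℕ × ℕ))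
    (↑(Finset.Icc 1 (k*ℓ)) : Set ℕ) ∧
  (∀ i ∈ Finset.Icc 1 ℓ, ∀ j ∈ Finset.Icc 1 k, ∀ j' ∈ Finset.Icc 1 k,
    j < j' → M i j < M i j') ∧
  (∀ i ∈ Finset.Icc 1 ℓ, ∀ i' ∈ Finset.Icc 1 ℓ, ∀ j ∈ Finset.Icc 1 k,
    i < i' → M i j < M i' j)

/-!
If positions `t < t'` of `a` carry values `a_t < a_t'`, then `a_t'` extends a longest increasing
subsequence ending at `a_t`, so `j(t) < j(t')`; if `a_t > a_t'`, the same holds for decreasing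
subsequences and `i(t) < i(t')`. Hence `γ_a t ≤ γ_a t'` componentwise with `t ≠ t'` forces
`t < t'`, i.e. `r` increases along rows and columns. It is a bijection onto `{1,…,kℓ}`
because `γ_a ∘ r` is the identity on the rectangle and both sets have `kℓ` elements.
-/

section Chains

variable {α : Type*} (R : α → α → Prop)

def chainLengthsEndingAt (a : List α) (t : ℕ) : Set ℕ :=
  {r | ∃ s : List α, s.Sublist (a.take t) ∧ s.length = r ∧ s.getLast? = a[t-1]? ∧ s.Pairwise R}

/-- `gridI a` and `gridJ a` are, definitionally, `longestChainEndingAt (· > ·) a` and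
`longestChainEndingAt (· < ·) a`. -/
noncomputable def longestChainEndingAt (a : List α) (t : ℕ) : ℕ :=
  sSup (chainLengthsEndingAt R a t)

variable {R}

lemma bddAbove_chainLengthsEndingAt (a : List α) (t : ℕ) :
    BddAbove (chainLengthsEndingAt R a t) :=
  ⟨t, by rintro _ ⟨s, hs, rfl, -⟩; exact hs.length_le.trans (List.length_take_le _ _)⟩

lemma exists_chain_length_eq_longestChainEndingAt {a : List α} {n : ℕ} (hn : n < a.length) :
    ∃ s : List α, s.Sublist (a.take (n + 1)) ∧ s.length = longestChainEndingAt R a (n + 1) ∧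
      s.getLast? = some a[n] ∧ s.Pairwise R := by
  have hsingleton : 1 ∈ chainLengthsEndingAt R a (n + 1) := by
    refine ⟨[a[n]], ?_, rfl, by simp, List.pairwise_singleton _ _⟩
    rw [List.take_succ_eq_append_getElem hn]
    exact (List.nil_sublist _).append (List.Sublist.refl _)
  obtain ⟨s, hs, hlen, hlast, hR⟩ :=
    Nat.sSup_mem ⟨1, hsingleton⟩ (bddAbove_chainLengthsEndingAt a (n + 1))
  exact ⟨s, hs, hlen, by simpa [hn] using hlast, hR⟩

lemma longestChainEndingAt_lt_of_rel [IsTrans α R] {a : List α} {m n : ℕ} (hmn : m < n)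
    (hn : n < a.length) (hR : R a[m] a[n]) :
    longestChainEndingAt R a (m + 1) < longestChainEndingAt R a (n + 1) := by
  obtain ⟨s, hs, hlen, hlast, hchain⟩ :=
    exists_chain_length_eq_longestChainEndingAt (R := R) (hmn.trans hn)
  have hextend : (s ++ [a[n]]).Sublist (a.take (n + 1)) := by
    rw [List.take_succ_eq_append_getElem hn]
    exact (hs.trans (List.take_sublist_take_left hmn)).append (List.Sublist.refl _)
  have hchain' : (s ++ [a[n]]).Pairwise R := by
    rw [← List.isChain_iff_pairwise] at hchain ⊢
    exact hchain.append (List.isChain_singleton _) (by simp [hlast, hR])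
  rw [← hlen]
  exact le_csSup (bddAbove_chainLengthsEndingAt a (n + 1))
    ⟨_, hextend, by simp, by simp [hn], hchain'⟩

end Chains

lemma lt_of_gridI_le_of_gridJ_le {a : List ℕ} (hnodup : a.Nodup) {t t' : ℕ}
    (ht : t ∈ Finset.Icc 1 a.length) (ht' : t' ∈ Finset.Icc 1 a.length) (hne : t ≠ t')
    (hI : gridI a t ≤ gridI a t') (hJ : gridJ a t ≤ gridJ a t') : t < t' := by
  rw [Finset.mem_Icc] at ht ht'
  obtain ⟨n, rfl⟩ : ∃ n, t = n + 1 := ⟨t - 1, by omega⟩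
  obtain ⟨n', rfl⟩ : ∃ n', t' = n' + 1 := ⟨t' - 1, by omega⟩
  by_contra! hle
  have hlt : n' < n := by omega
  have hval : a[n'] ≠ a[n] := fun h => by
    have := hnodup.getElem_inj_iff.mp h
    omega
  rcases hval.lt_or_gt with hval | hval
  · exact hJ.not_gt (longestChainEndingAt_lt_of_rel (R := (· < ·)) hlt (by omega) hval)
  · exact hI.not_gt (longestChainEndingAt_lt_of_rel (R := (· > ·)) hlt (by omega) hval)

lemma IsSYT.of_mapsTo_of_injOn {ℓ k : ℕ} {M : ℕ → ℕ → ℕ}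
    (hmaps : Set.MapsTo (fun p : ℕ × ℕ => M p.1 p.2) ↑(Finset.Icc 1 ℓ ×ˢ Finset.Icc 1 k)
      ↑(Finset.Icc 1 (k * ℓ)))
    (hinj : Set.InjOn (fun p : ℕ × ℕ => M p.1 p.2) ↑(Finset.Icc 1 ℓ ×ˢ Finset.Icc 1 k))
    (hlt : ∀ i ∈ Finset.Icc 1 ℓ, ∀ j ∈ Finset.Icc 1 k, ∀ i' ∈ Finset.Icc 1 ℓ,
      ∀ j' ∈ Finset.Icc 1 k, i ≤ i' → j ≤ j' → (i, j) ≠ (i', j') → M i j < M i' j') :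
    IsSYT ℓ k M := by
  refine ⟨⟨hmaps, hinj, Finset.surjOn_of_injOn_of_card_le _ hmaps hinj (by simp [Nat.mul_comm])⟩,
    ?_, ?_⟩
  · intro i hi j hj j' hj' h
    exact hlt i hi j hj i hi j' hj' le_rfl h.le (by simp [h.ne])
  · intro i hi i' hi' j hj h
    exact hlt i hi j hj i' hi' j hj h.le le_rfl (by simp [h.ne])

theorem grid_ranking_is_SYT_general (k ℓ : ℕ) (a : List ℕ)
    (hperm : a.Perm (List.range' 1 (k*ℓ)))
    (r : ℕ → ℕ → ℕ)
    (hr : ∀ i ∈ Finset.Icc 1 ℓ, ∀ j ∈ Finset.Icc 1 k,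
      r i j ∈ Finset.Icc 1 (k*ℓ) ∧ gridI a (r i j) = i ∧ gridJ a (r i j) = j) :
    IsSYT ℓ k r := by
  have hlen : a.length = k * ℓ := by rw [hperm.length_eq, List.length_range']
  have hnodup : a.Nodup := hperm.nodup_iff.mpr (List.nodup_range' _)
  have hgamma : Set.LeftInvOn (fun t => (gridI a t, gridJ a t)) (fun p : ℕ × ℕ => r p.1 p.2)
      ↑(Finset.Icc 1 ℓ ×ˢ Finset.Icc 1 k) := fun p hp => by
    rw [Finset.mem_coe, Finset.mem_product] at hp
    obtain ⟨-, hI, hJ⟩ := hr _ hp.1 _ hp.2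
    exact Prod.ext hI hJ
  refine IsSYT.of_mapsTo_of_injOn (fun p hp => ?_) hgamma.injOn ?_
  · rw [Finset.mem_coe, Finset.mem_product] at hp
    exact (hr _ hp.1 _ hp.2).1
  intro i hi j hj i' hi' j' hj' hii' hjj' hne
  obtain ⟨hmem, hI, hJ⟩ := hr i hi j hj
  obtain ⟨hmem', hI', hJ'⟩ := hr i' hi' j' hj'
  rw [← hlen] at hmem hmem'
  refine lt_of_gridI_le_of_gridJ_le hnodup hmem hmem' (fun h => hne ?_) (by omega) (by omega)
  exact hgamma.injOn (Finset.mem_product.mpr ⟨hi, hj⟩) (Finset.mem_product.mpr ⟨hi', hj'⟩) h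

theorem grid_ranking_is_SYT (k ℓ : ℕ) (a : List ℕ)
    (hperm : a.Perm (List.range' 1 (k*ℓ)))
    (hinc : ¬ ∃ s : List ℕ, s.Sublist a ∧ s.length = k+1 ∧ s.Pairwise (· < ·))
    (hdec : ¬ ∃ s : List ℕ, s.Sublist a ∧ s.length = ℓ+1 ∧ s.Pairwise (· > ·))
    (r : ℕ → ℕ → ℕ)
    (hr : ∀ i ∈ Finset.Icc 1 ℓ, ∀ j ∈ Finset.Icc 1 k,
      r i j ∈ Finset.Icc 1 (k*ℓ) ∧ gridI a (r i j) = i ∧ gridJ a (r i j) = j) :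
    IsSYT ℓ k r :=
  grid_ranking_is_SYT_general k ℓ a hperm r hr
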